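/- arXiv:math/0301118 — 7 statements merged into one kernel-verified Lean document; each statement's English description precedes it below -/
import Mathlib

section
/- Let S ⊆ 𝓑 × 𝓑 satisfy: (1) if (f,v₁) ∈ S and (f,v₂) ∈ S then (f, α·v₁ + v₂) ∈ S for every α ∈ ℂ; (2) S is closed: if (fₙ,vₙ) ∈ S for all n and (fₙ,vₙ) → (f,v) in 𝓑 × 𝓑, then (f,v) ∈ S; (3) if (f,v) ∈ S then f ∈ 𝓥 and (𝓡f, D𝓡_f·v) ∈ S; (4) the set {(𝓡̃f, D𝓡̃_f·v) : (f,v) ∈ S, ‖v‖ ≤ 1} is bounded in 𝓑̃ × 𝓑̃; (5) there exists C > 0 such that ‖D𝓡ⁿ_f·v‖ ≤ C‖v‖ for every (f,v) ∈ S and every n ≥ 0; (6) for every (f,v) ∈ S one has ‖D𝓡ⁿ_f·v‖ → 0 as n → ∞. Then there exist λ < 1 and N ∈ ℕ such that ‖D𝓡^N_f·v‖ ≤ λ‖v‖ for every (f,v) ∈ S. -/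
open Filter Topology

/-- The derivative of the `n`-th iterate of `R`, given a derivative assignment `DR`:
`derivIter R DR n f = DR (R^[n-1] f) ∘ ⋯ ∘ DR f`, with `derivIter R DR 0 f = id`. -/
noncomputable def derivIter {𝓑 : Type*} [NormedAddCommGroup 𝓑] [NormedSpace ℂ 𝓑]
    (R : 𝓑 → 𝓑) (DR : 𝓑 → 𝓑 →L[ℂ] 𝓑) : ℕ → 𝓑 → (𝓑 →L[ℂ] 𝓑)
  | 0, _ => ContinuousLinearMap.id ℂ 𝓑
  | (n + 1), f => (DR (R^[n] f)).comp (derivIter R DR n f)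

lemma derivIter_add {𝓑 : Type*} [NormedAddCommGroup 𝓑] [NormedSpace ℂ 𝓑]
    (R : 𝓑 → 𝓑) (DR : 𝓑 → 𝓑 →L[ℂ] 𝓑) (m n : ℕ) (f : 𝓑) :
    derivIter R DR (m + n) f = (derivIter R DR n (R^[m] f)).comp (derivIter R DR m f) := by
  induction n with
  | zero => simp [derivIter]
  | succ n ih =>
    show derivIter R DR ((m + n) + 1) f = _
    rw [derivIter, ih, derivIter, ContinuousLinearMap.comp_assoc, Nat.add_comm m n,
      Function.iterate_add_apply]

lemma derivIter_succ_left {𝓑 : Type*} [NormedAddCommGroup 𝓑] [NormedSpace ℂ 𝓑]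
    (R : 𝓑 → 𝓑) (DR : 𝓑 → 𝓑 →L[ℂ] 𝓑) (n : ℕ) (f : 𝓑) (v : 𝓑) :
    derivIter R DR (n + 1) f v = derivIter R DR n (R f) (DR f v) := by
  rw [Nat.add_comm n 1, derivIter_add]
  simp [derivIter]


theorem stmt0
    {𝓑 𝓑' : Type*} [NormedAddCommGroup 𝓑] [NormedSpace ℂ 𝓑] [CompleteSpace 𝓑]
    [NormedAddCommGroup 𝓑'] [NormedSpace ℂ 𝓑'] [CompleteSpace 𝓑']
    -- `i : 𝓑' → 𝓑` is a compact continuous linear map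
    (i : 𝓑' →L[ℂ] 𝓑) (hi : IsCompactOperator i)
    -- `𝓥 ⊆ 𝓑` is open, `𝓡' : 𝓥 → 𝓑'` is complex analytic, and `𝓡 = i ∘ 𝓡'`
    (𝓥 : Set 𝓑) (h𝓥 : IsOpen 𝓥)
    (R' : 𝓑 → 𝓑') (hR' : AnalyticOnNhd ℂ R' 𝓥)
    (R : 𝓑 → 𝓑) (hR : ∀ f, R f = i (R' f))
    -- Fréchet derivatives of `𝓡'` and `𝓡` on `𝓥`
    (DR' : 𝓑 → 𝓑 →L[ℂ] 𝓑')
    (hDR' : ∀ f ∈ 𝓥, HasFDerivAt R' (DR' f) f)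
    (DR : 𝓑 → 𝓑 →L[ℂ] 𝓑)
    (hDR : ∀ f, DR f = i.comp (DR' f))
    (S : Set (𝓑 × 𝓑))
    -- (1) vector bundle structure
    (h1 : ∀ f v₁ v₂, (f, v₁) ∈ S → (f, v₂) ∈ S → ∀ α : ℂ, (f, α • v₁ + v₂) ∈ S)
    -- (2) semicontinuity (closedness)
    (h2 : ∀ (fs vs : ℕ → 𝓑) (f v : 𝓑), (∀ n, (fs n, vs n) ∈ S) →
      Tendsto (fun n => (fs n, vs n)) atTop (𝓝 (f, v)) → (f, v) ∈ S)
    -- (3) invariance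
    (h3 : ∀ f v, (f, v) ∈ S → f ∈ 𝓥 ∧ (R f, DR f v) ∈ S)
    -- (4) compactness
    (h4 : Bornology.IsBounded
      {p : 𝓑' × 𝓑' | ∃ f v, (f, v) ∈ S ∧ ‖v‖ ≤ 1 ∧ p = (R' f, DR' f v)})
    -- (5) uniform continuity
    (C : ℝ) (hC : 0 < C)
    (h5 : ∀ f v, (f, v) ∈ S → ∀ n : ℕ, ‖derivIter R DR n f v‖ ≤ C * ‖v‖)
    -- (6) orbit-wise convergence to zero
    (h6 : ∀ f v, (f, v) ∈ S →
      Tendsto (fun n => ‖derivIter R DR n f v‖) atTop (𝓝 0)) :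
    ∃ lam : ℝ, lam < 1 ∧ ∃ N : ℕ, ∀ f v, (f, v) ∈ S →
      ‖derivIter R DR N f v‖ ≤ lam * ‖v‖ := by
  by_contra hcon
  push_neg at hcon
  -- S is closed under scalar multiplication in the fiber
  have hsmul : ∀ f v, (f, v) ∈ S → ∀ c : ℂ, (f, c • v) ∈ S := by
    intro f v hv c
    have h0 : (f, (0 : 𝓑)) ∈ S := by
      have := h1 f v v hv hv (-1)
      simpa using this
    have := h1 f v 0 hv h0 c
    simpa using this
  -- orbit lemma
  have horbit : ∀ (m : ℕ) f v, (f, v) ∈ S → (R^[m] f, derivIter R DR m f v) ∈ S := by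
    intro m
    induction m with
    | zero => intro f v hv; simpa [derivIter] using hv
    | succ m ih =>
      intro f v hv
      have h := (h3 _ _ (ih f v hv)).2
      simpa [Function.iterate_succ_apply', derivIter] using h
  have hmemV : ∀ f v, (f, v) ∈ S → f ∈ 𝓥 := fun f v hv => (h3 f v hv).1
  -- continuity of R on 𝓥
  have hRc : ∀ f ∈ 𝓥, ContinuousAt R f := by
    intro f hf
    have h1c : ContinuousAt R' f := (hR' f hf).continuousAt
    have h2c : ContinuousAt (fun g => i (R' g)) f := i.continuous.continuousAt.comp h1c
    exact h2c.congr (Eventually.of_forall fun g => (hR g).symm)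
  -- continuity of DR on 𝓥
  have hDRc : ∀ f ∈ 𝓥, ContinuousAt DR f := by
    intro f hf
    have hfd : ContinuousAt (fderiv ℂ R') f := ((hR'.fderiv) f hf).continuousAt
    have heq : (fderiv ℂ R') =ᶠ[𝓝 f] DR' := by
      filter_upwards [h𝓥.mem_nhds hf] with g hg
      exact (hDR' g hg).fderiv
    have hDR'c : ContinuousAt DR' f := hfd.congr heq
    have hcm : ContinuousAt (fun g => (ContinuousLinearMap.compL ℂ 𝓑 𝓑' 𝓑 i) (DR' g)) f :=
      ((ContinuousLinearMap.compL ℂ 𝓑 𝓑' 𝓑 i).continuous.continuousAt).comp hDR'c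
    exact hcm.congr (Eventually.of_forall fun g => by rw [hDR g]; rfl)
  -- extract a sequence of near-counterexamples with unit vectors
  have hms : ∀ n : ℕ, ∃ f v, (f, v) ∈ S ∧ ‖v‖ = 1 ∧
      (1 - ((n : ℝ) + 1)⁻¹) < ‖derivIter R DR (n + 1) f v‖ := by
    intro n
    have hlam : (1 - ((n : ℝ) + 1)⁻¹) < 1 := by
      have : (0 : ℝ) < ((n : ℝ) + 1)⁻¹ := by positivity
      linarith
    obtain ⟨f, v, hfv, hlt⟩ := hcon (1 - ((n : ℝ) + 1)⁻¹) hlam (n + 1)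
    have hv0 : v ≠ 0 := by
      rintro rfl
      simp at hlt
    have hvpos : (0 : ℝ) < ‖v‖ := norm_pos_iff.mpr hv0
    refine ⟨f, ((‖v‖ : ℂ))⁻¹ • v, hsmul f v hfv _, ?_, ?_⟩
    · simp [norm_smul, Complex.norm_real, abs_of_pos hvpos, inv_mul_cancel₀ (ne_of_gt hvpos)]
    · rw [map_smul, norm_smul]
      have : ‖((‖v‖ : ℂ))⁻¹‖ = ‖v‖⁻¹ := by
        simp [Complex.norm_real, abs_of_pos hvpos]
      rw [this, lt_inv_mul_iff₀ hvpos]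
      calc ‖v‖ * (1 - ((n : ℝ) + 1)⁻¹) = (1 - ((n : ℝ) + 1)⁻¹) * ‖v‖ := mul_comm _ _
        _ < _ := hlt
  choose fs vs hSn hnorm hlt using hms
  set g : ℕ → 𝓑 := fun n => R (fs n) with hg
  set w : ℕ → 𝓑 := fun n => DR (fs n) (vs n) with hw
  have hgw : ∀ n, (g n, w n) ∈ S := fun n => (h3 _ _ (hSn n)).2
  have hlt' : ∀ n : ℕ, (1 - ((n : ℝ) + 1)⁻¹) < ‖derivIter R DR n (g n) (w n)‖ := by
    intro n
    have := hlt n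
    rwa [derivIter_succ_left] at this
  -- compactness: the sequence (g n, w n) lies in a compact set
  obtain ⟨r, hr⟩ := (isBounded_iff_forall_norm_le.mp h4)
  have hi' : IsCompactOperator ⇑(i.toLinearMap) := hi
  have hK : IsCompact (closure (⇑i '' Metric.closedBall 0 r)) := by
    have := hi'.isCompact_closure_image_closedBall (𝕜₁ := ℂ) r
    exact this
  set K : Set 𝓑 := closure (⇑i '' Metric.closedBall 0 r) with hKdef
  have hmemB : ∀ n, (R' (fs n), DR' (fs n) (vs n)) ∈
      {p : 𝓑' × 𝓑' | ∃ f v, (f, v) ∈ S ∧ ‖v‖ ≤ 1 ∧ p = (R' f, DR' f v)} := by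
    intro n
    exact ⟨fs n, vs n, hSn n, le_of_eq (hnorm n), rfl⟩
  have hgK : ∀ n, g n ∈ K := by
    intro n
    refine subset_closure ⟨R' (fs n), ?_, (hR (fs n)).symm⟩
    have := hr _ (hmemB n)
    exact mem_closedBall_zero_iff.mpr ((norm_fst_le (R' (fs n), DR' (fs n) (vs n))).trans this)
  have hwK : ∀ n, w n ∈ K := by
    intro n
    refine subset_closure ⟨DR' (fs n) (vs n), ?_, ?_⟩
    · have := hr _ (hmemB n)
      exact mem_closedBall_zero_iff.mpr ((norm_snd_le (R' (fs n), DR' (fs n) (vs n))).trans this)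
    · show i (DR' (fs n) (vs n)) = DR (fs n) (vs n)
      rw [hDR (fs n)]
      rfl
  obtain ⟨⟨glim, wlim⟩, -, φ, hφ, hconv⟩ :=
    (hK.prod hK).tendsto_subseq (x := fun n => (g n, w n))
      (fun n => Set.mem_prod.mpr ⟨hgK n, hwK n⟩)
  have hconv' : Tendsto (fun k => (g (φ k), w (φ k))) atTop (𝓝 (glim, wlim)) := hconv
  have hSlim : (glim, wlim) ∈ S :=
    h2 (fun k => g (φ k)) (fun k => w (φ k)) glim wlim (fun k => hgw (φ k)) hconv'
  have hVm : ∀ m : ℕ, R^[m] glim ∈ 𝓥 := fun m => hmemV _ _ (horbit m _ _ hSlim)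
  -- continuity along the orbit
  have key : ∀ m : ℕ, Tendsto
      (fun k => (R^[m] (g (φ k)), derivIter R DR m (g (φ k)) (w (φ k)))) atTop
      (𝓝 (R^[m] glim, derivIter R DR m glim wlim)) := by
    intro m
    induction m with
    | zero => simpa [derivIter] using hconv'
    | succ m ih =>
      have hA : Tendsto (fun k => R^[m] (g (φ k))) atTop (𝓝 (R^[m] glim)) :=
        (continuous_fst.tendsto _).comp ih
      have hB : Tendsto (fun k => derivIter R DR m (g (φ k)) (w (φ k))) atTop
          (𝓝 (derivIter R DR m glim wlim)) := (continuous_snd.tendsto _).comp ih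
      have hA' : Tendsto (fun k => R (R^[m] (g (φ k)))) atTop (𝓝 (R (R^[m] glim))) :=
        Filter.Tendsto.comp (hRc _ (hVm m)) hA
      have hDRt : Tendsto (fun k => DR (R^[m] (g (φ k)))) atTop (𝓝 (DR (R^[m] glim))) :=
        Filter.Tendsto.comp (hDRc _ (hVm m)) hA
      have hB' : Tendsto (fun k => DR (R^[m] (g (φ k)))
            (derivIter R DR m (g (φ k)) (w (φ k)))) atTop
          (𝓝 (DR (R^[m] glim) (derivIter R DR m glim wlim))) := by
        exact (isBoundedBilinearMap_apply.continuous.tendsto _).comp (hDRt.prodMk_nhds hB)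
      have := hA'.prodMk_nhds hB'
      simpa [Function.iterate_succ_apply', derivIter] using this
  -- choose m with small norm at the limit
  obtain ⟨m, hm⟩ : ∃ m, ‖derivIter R DR m glim wlim‖ < (4 * C)⁻¹ := by
    have hpos : (0 : ℝ) < (4 * C)⁻¹ := by positivity
    exact ((h6 glim wlim hSlim).eventually_lt_const hpos).exists
  have hu : Tendsto (fun k => ‖derivIter R DR m (g (φ k)) (w (φ k))‖) atTop
      (𝓝 ‖derivIter R DR m glim wlim‖) :=
    (continuous_norm.tendsto _).comp ((continuous_snd.tendsto _).comp (key m))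
  have hev : ∀ᶠ k in atTop, ‖derivIter R DR m (g (φ k)) (w (φ k))‖ < (4 * C)⁻¹ :=
    hu.eventually_lt_const hm
  obtain ⟨K0, hK0⟩ := eventually_atTop.mp hev
  set k := max K0 (max m 1) with hk
  set n := φ k with hn
  have hkK0 : K0 ≤ k := le_max_left _ _
  have hkm : m ≤ k := le_trans (le_max_left _ _) (le_max_right _ _)
  have hk1 : 1 ≤ k := le_trans (le_max_right _ _) (le_max_right _ _)
  have hkn : k ≤ n := hφ.le_apply
  have hmn : m ≤ n := le_trans hkm hkn
  have hn1 : 1 ≤ n := le_trans hk1 hkn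
  -- the contradiction
  have hsplit : ∀ x y : 𝓑, derivIter R DR n x y =
      derivIter R DR (n - m) (R^[m] x) (derivIter R DR m x y) := by
    intro x y
    conv_lhs => rw [show n = m + (n - m) from (Nat.add_sub_cancel' hmn).symm]
    rw [derivIter_add]
    rfl
  have hSm : (R^[m] (g n), derivIter R DR m (g n) (w n)) ∈ S := horbit m _ _ (hgw n)
  have hbound := h5 _ _ hSm (n - m)
  have hsmall : ‖derivIter R DR m (g n) (w n)‖ < (4 * C)⁻¹ := hK0 k hkK0
  have hfinal : ‖derivIter R DR n (g n) (w n)‖ < 4⁻¹ := by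
    rw [hsplit (g n) (w n)]
    calc ‖derivIter R DR (n - m) (R^[m] (g n)) (derivIter R DR m (g n) (w n))‖
        ≤ C * ‖derivIter R DR m (g n) (w n)‖ := hbound
      _ < C * (4 * C)⁻¹ := by
          exact mul_lt_mul_of_pos_left hsmall hC
      _ = 4⁻¹ := by field_simp
  have hlower : (1 : ℝ) - ((n : ℝ) + 1)⁻¹ < ‖derivIter R DR n (g n) (w n)‖ := hlt' n
  have hhalf : (1 : ℝ) / 2 ≤ 1 - ((n : ℝ) + 1)⁻¹ := by
    have : ((n : ℝ) + 1)⁻¹ ≤ 1 / 2 := by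
      rw [inv_le_comm₀ (by positivity) (by norm_num)]
      have : (1 : ℝ) ≤ (n : ℝ) := by exact_mod_cast hn1
      linarith
    linarith
  linarith
end

section
/- Let T be a compact continuous linear operator on a complex Banach space B. If Tⁿv → 0 as n → ∞ for every v ∈ B, then the spectral radius of T is strictly smaller than 1. -/
open Filter Topology

theorem stmt1 {B : Type*} [NormedAddCommGroup B] [NormedSpace ℂ B] [CompleteSpace B]
    (T : B →L[ℂ] B) (hT : IsCompactOperator T)
    (h : ∀ v : B, Tendsto (fun n : ℕ => (T ^ n) v) atTop (𝓝 0)) :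
    spectralRadius ℂ T < 1 := by
  -- uniform bound on ‖T ^ n‖ by Banach–Steinhaus
  obtain ⟨C₀, hC₀⟩ : ∃ C, ∀ n : ℕ, ‖T ^ n‖ ≤ C := by
    apply banach_steinhaus
    intro x
    have hb := (h x).norm
    rw [norm_zero] at hb
    obtain ⟨C, hC⟩ := hb.bddAbove_range
    exact ⟨C, fun n => hC ⟨n, rfl⟩⟩
  set C : ℝ := max C₀ 1 with hCdef
  have hC : ∀ n : ℕ, ‖T ^ n‖ ≤ C := fun n => (hC₀ n).trans (le_max_left _ _)
  have hCpos : (0 : ℝ) < C := lt_of_lt_of_le one_pos (le_max_right _ _)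
  -- the compact set
  set K : Set B := closure (T '' Metric.closedBall 0 1) with hKdef
  have hK : IsCompact K := hT.isCompact_closure_image_closedBall 1
  -- ε-net argument : find n with ‖T ^ (n+1)‖ ≤ 1/2
  obtain ⟨n, hn⟩ : ∃ n : ℕ, ∀ w ∈ K, ‖(T ^ n) w‖ ≤ 1 / 2 := by
    set δ : ℝ := 1 / (4 * C) with hδdef
    have hδpos : 0 < δ := by positivity
    -- finite subcover by δ-balls
    obtain ⟨t, htK, htcov⟩ := hK.elim_nhds_subcover (fun x => Metric.ball x δ)
      (fun x _ => Metric.ball_mem_nhds x hδpos)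
    -- for each center, find a good N
    have hex : ∀ x : B, ∃ N : ℕ, ∀ m ≥ N, ‖(T ^ m) x‖ < 1 / 4 := by
      intro x
      have := (h x).norm
      rw [norm_zero] at this
      have := Metric.tendsto_atTop.1 this (1 / 4) (by norm_num)
      obtain ⟨N, hN⟩ := this
      exact ⟨N, fun m hm => by
        have := hN m hm
        rwa [Real.dist_eq, sub_zero, abs_of_nonneg (norm_nonneg _)] at this⟩
    choose N hN using hex
    refine ⟨t.sup N, fun w hw => ?_⟩
    obtain ⟨x, hxt, hxw⟩ := Set.mem_iUnion₂.1 (htcov hw)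
    have hNx : ‖(T ^ t.sup N) x‖ < 1 / 4 := hN x _ (Finset.le_sup hxt)
    have hwx : ‖w - x‖ < δ := by
      rw [← dist_eq_norm]
      exact Metric.mem_ball.1 hxw
    calc ‖(T ^ t.sup N) w‖
        = ‖(T ^ t.sup N) (w - x) + (T ^ t.sup N) x‖ := by rw [map_sub, sub_add_cancel]
      _ ≤ ‖(T ^ t.sup N) (w - x)‖ + ‖(T ^ t.sup N) x‖ := norm_add_le _ _
      _ ≤ C * δ + 1 / 4 := by
          gcongr
          calc ‖(T ^ t.sup N) (w - x)‖ ≤ ‖T ^ t.sup N‖ * ‖w - x‖ :=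
                (T ^ t.sup N).le_opNorm _
            _ ≤ C * δ := by
                apply mul_le_mul (hC _) hwx.le (norm_nonneg _) hCpos.le
      _ ≤ 1 / 2 := by
          have h4 : C * δ = 1 / 4 := by
            rw [hδdef]; field_simp
          rw [h4]; norm_num
  -- hence ‖T ^ (n+1)‖ ≤ 1/2
  have hle : ‖T ^ (n + 1)‖ ≤ 1 / 2 := by
    apply ContinuousLinearMap.opNorm_le_bound' _ (by norm_num)
    intro v hv
    have hvpos : (0 : ℝ) < ‖v‖ := lt_of_le_of_ne (norm_nonneg _) (Ne.symm hv)
    set c : ℂ := (‖v‖ : ℂ) with hcdef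
    have hc : ‖c‖ = ‖v‖ := by simp [hcdef, abs_of_nonneg hvpos.le]
    have hcne : c ≠ 0 := Complex.ofReal_ne_zero.mpr hvpos.ne'
    have hu : ‖c⁻¹ • v‖ ≤ 1 := by
      rw [norm_smul, norm_inv, hc, inv_mul_cancel₀ hvpos.ne']
    have hmem : T (c⁻¹ • v) ∈ K :=
      subset_closure ⟨c⁻¹ • v, Metric.mem_closedBall.2 (by simpa using hu), rfl⟩
    have hkey : ‖(T ^ n) (T (c⁻¹ • v))‖ ≤ 1 / 2 := hn _ hmem
    have heq : (T ^ (n + 1)) v = c • (T ^ n) (T (c⁻¹ • v)) := by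
      rw [map_smul, map_smul, smul_inv_smul₀ hcne, pow_succ]
      rfl
    rw [heq, norm_smul, hc, mul_comm]
    exact mul_le_mul_of_nonneg_right hkey hvpos.le
  -- conclude via the Gelfand-type bound
  have hlt : (‖T ^ (n + 1)‖₊ : ENNReal) < 1 := by
    rw [← ENNReal.coe_one, ENNReal.coe_lt_coe, ← NNReal.coe_lt_coe]
    calc (‖T ^ (n + 1)‖₊ : ℝ) = ‖T ^ (n + 1)‖ := rfl
      _ ≤ 1 / 2 := hle
      _ < 1 := by norm_num
  have hone : (‖(1 : B →L[ℂ] B)‖₊ : ENNReal) ≤ 1 := by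
    rw [← ENNReal.coe_one, ENNReal.coe_le_coe, ← NNReal.coe_le_coe]
    calc (‖(1 : B →L[ℂ] B)‖₊ : ℝ) = ‖(1 : B →L[ℂ] B)‖ := rfl
      _ ≤ 1 := by rw [ContinuousLinearMap.one_def]; exact ContinuousLinearMap.norm_id_le
  have hexp : (0 : ℝ) < 1 / (n + 1) := by positivity
  calc spectralRadius ℂ T
      ≤ (‖T ^ (n + 1)‖₊ : ENNReal) ^ (1 / (n + 1) : ℝ) *
        (‖(1 : B →L[ℂ] B)‖₊ : ENNReal) ^ (1 / (n + 1) : ℝ) :=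
        spectrum.spectralRadius_le_pow_nnnorm_pow_one_div ℂ T n
    _ ≤ (‖T ^ (n + 1)‖₊ : ENNReal) ^ (1 / (n + 1) : ℝ) * 1 := by
        gcongr
        exact ENNReal.rpow_le_one hone hexp.le
    _ = (‖T ^ (n + 1)‖₊ : ENNReal) ^ (1 / (n + 1) : ℝ) := mul_one _
    _ < 1 := ENNReal.rpow_lt_one hlt hexp
end

section
/- There exist δ ∈ (0,r), ρ ∈ (0,r), and a complex analytic map y : B_ℂ(0,δ) → E with y(0) = 0 and ‖y(x)‖ < ρ for all |x| < δ, such that y(x) = G(y(x)) + x·h(x, y(x)) for every x ∈ B_ℂ(0,δ); moreover the solution is unique pointwise: if |x₀| < δ, ‖y₀‖ < ρ and y₀ = G(y₀) + x₀·h(x₀, y₀), then y₀ = y(x₀). -/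
/-!
The map `F (x, y) = y - G y - x • h (x, y)` is analytic near `(0, 0)` and vanishes there; its
partial derivative in `y` at `(0, 0)` is `1 - G'(0)`, invertible because the Lipschitz bound gives
`‖G'(0)‖ ≤ κ < 1`. The analytic implicit function theorem then yields an analytic solution `y(x)`
of `F (x, y(x)) = 0`, unique near `(0, 0)`; shrinking that neighbourhood to a product of balls
produces `δ` and `ρ`.
-/

open Filter Topology
open scoped ContDiff

def fixedPointResidual {𝕜 E : Type*} [NormedField 𝕜] [NormedAddCommGroup E] [NormedSpace 𝕜 E]
    (G : E → E) (h : 𝕜 × E → E) (p : 𝕜 × E) : E :=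
  p.2 - G p.2 - p.1 • h p

section Residual

variable {𝕜 E : Type*} [NontriviallyNormedField 𝕜] [NormedAddCommGroup E] [NormedSpace 𝕜 E]
  {G : E → E} {h : 𝕜 × E → E}

theorem fixedPointResidual_eq_zero_iff {x : 𝕜} {y : E} :
    fixedPointResidual G h (x, y) = 0 ↔ y = G y + x • h (x, y) := by
  rw [fixedPointResidual, sub_sub, sub_eq_zero]

theorem analyticAt_fixedPointResidual {a : 𝕜} {b : E} (hG : AnalyticAt 𝕜 G b)
    (hh : AnalyticAt 𝕜 h (a, b)) : AnalyticAt 𝕜 (fixedPointResidual G h) (a, b) :=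
  (analyticAt_snd.sub (hG.comp analyticAt_snd)).sub (analyticAt_fst.smul hh)

/-- At `x = 0` the term `x • h (x, y)` has vanishing partial derivative in `y`. -/
theorem fderiv_fixedPointResidual_comp_inr {b : E} (hG : DifferentiableAt 𝕜 G b)
    (hh : DifferentiableAt 𝕜 h (0, b)) :
    fderiv 𝕜 (fixedPointResidual G h) (0, b) ∘L .inr 𝕜 𝕜 E = 1 - fderiv 𝕜 G b := by
  have hd : HasFDerivAt (fixedPointResidual G h) _ (0, b) :=
    (hasFDerivAt_snd.sub (hG.hasFDerivAt.comp (0, b) hasFDerivAt_snd)).sub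
      (hasFDerivAt_fst.smul hh.hasFDerivAt)
  rw [hd.fderiv]
  ext v
  simp

end Residual

theorem ContinuousLinearMap.isInvertible_one_sub_of_norm_lt_one {𝕜 E : Type*}
    [NontriviallyNormedField 𝕜] [NormedAddCommGroup E] [NormedSpace 𝕜 E] [CompleteSpace E]
    {A : E →L[𝕜] E} (hA : ‖A‖ < 1) : (1 - A).IsInvertible :=
  ⟨ContinuousLinearEquiv.unitsEquiv 𝕜 E (Units.oneSub A hA), rfl⟩

theorem AnalyticAt.exists_implicitFunction {𝕜 : Type*} [RCLike 𝕜]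
    {E₁ E₂ F : Type*} [NormedAddCommGroup E₁] [NormedSpace 𝕜 E₁] [CompleteSpace E₁]
    [NormedAddCommGroup E₂] [NormedSpace 𝕜 E₂] [CompleteSpace E₂]
    [NormedAddCommGroup F] [NormedSpace 𝕜 F] [CompleteSpace F]
    {f : E₁ × E₂ → F} {u : E₁ × E₂} (hf : AnalyticAt 𝕜 f u)
    (hf₂ : (fderiv 𝕜 f u ∘L .inr 𝕜 E₁ E₂).IsInvertible) :
    ∃ ψ : E₁ → E₂, ψ u.1 = u.2 ∧ (∀ᶠ x in 𝓝 u.1, AnalyticAt 𝕜 ψ x ∧ f (x, ψ x) = f u) ∧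
      ∀ᶠ v in 𝓝 u, f v = f u → v.2 = ψ v.1 := by
  have cdf : ContDiffAt 𝕜 ω f u := hf.contDiffAt
  have hω : (ω : WithTop ℕ∞) ≠ 0 := by simp
  refine ⟨cdf.implicitFunction hω hf₂, cdf.implicitFunction_apply_self hω hf₂,
    (cdf.contDiffAt_implicitFunction hω hf₂).analyticAt.eventually_analyticAt.and
      (cdf.eventually_apply_implicitFunction hω hf₂), ?_⟩
  filter_upwards [cdf.eventually_apply_eq_iff_implicitFunction hω hf₂] with v hv hfv
  exact (hv.1 hfv).symm

theorem exists_radii_of_eventually {X E : Type*} [NormedAddCommGroup X] [NormedAddCommGroup E]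
    {ψ : X → E} (hψ : ContinuousAt ψ 0) (hψ0 : ψ 0 = 0) {P : X → Prop} {Q : X × E → Prop}
    (hP : ∀ᶠ x in 𝓝 0, P x) (hQ : ∀ᶠ v in 𝓝 0, Q v) {r : ℝ} (hr : 0 < r) :
    ∃ δ ρ : ℝ, 0 < δ ∧ δ < r ∧ 0 < ρ ∧ ρ < r ∧ ∀ x ∈ Metric.ball (0 : X) δ,
      P x ∧ ‖ψ x‖ < ρ ∧ ∀ y : E, ‖y‖ < ρ → Q (x, y) := by
  obtain ⟨ε, hε, hεQ⟩ := Metric.eventually_nhds_iff_ball.1 hQ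
  set ρ := min ε r / 2 with hρdef
  have hρ : 0 < ρ := by positivity
  have hρε : ρ < ε := by linarith [min_le_left ε r]
  have hρr : ρ < r := by linarith [min_le_right ε r]
  have hψρ : ∀ᶠ x in 𝓝 0, ‖ψ x‖ < ρ := by
    simpa [hψ0] using hψ.norm.eventually_lt_const (by simpa [hψ0] using hρ)
  obtain ⟨δ, hδ, hδP⟩ := Metric.eventually_nhds_iff_ball.1 (hP.and hψρ)
  refine ⟨min δ ρ, ρ, by positivity, (min_le_right _ _).trans_lt hρr, hρ, hρr, fun x hx => ?_⟩
  rw [Metric.mem_ball, dist_zero_right, lt_min_iff] at hx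
  refine ⟨(hδP x (by simpa using hx.1)).1, (hδP x (by simpa using hx.1)).2, fun y hy => hεQ _ ?_⟩
  rw [Metric.mem_ball, dist_zero_right, Prod.norm_def, max_lt_iff]
  exact ⟨hx.2.trans hρε, hy.trans hρε⟩

theorem stmt5_general {E : Type*} [NormedAddCommGroup E] [NormedSpace ℂ E] [CompleteSpace E]
    (r : ℝ) (hr : 0 < r) (κ : ℝ) (hκ1 : κ < 1)
    (G : E → E) (hG : AnalyticOnNhd ℂ G (Metric.ball 0 r)) (hG0 : G 0 = 0)
    (hGlip : ∀ y ∈ Metric.ball (0 : E) r, ∀ y' ∈ Metric.ball (0 : E) r,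
      ‖G y - G y'‖ ≤ κ * ‖y - y'‖)
    (h : ℂ × E → E)
    (hh : AnalyticOnNhd ℂ h (Metric.ball (0 : ℂ) r ×ˢ Metric.ball (0 : E) r)) :
    ∃ δ ρ : ℝ, 0 < δ ∧ δ < r ∧ 0 < ρ ∧ ρ < r ∧
      ∃ y : ℂ → E, AnalyticOnNhd ℂ y (Metric.ball 0 δ) ∧ y 0 = 0 ∧
        (∀ x ∈ Metric.ball (0 : ℂ) δ,
          ‖y x‖ < ρ ∧ y x = G (y x) + x • h (x, y x)) ∧
        (∀ x₀ ∈ Metric.ball (0 : ℂ) δ, ∀ y₀ : E, ‖y₀‖ < ρ →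
          y₀ = G y₀ + x₀ • h (x₀, y₀) → y₀ = y x₀) := by
  have h0 : (0 : E) ∈ Metric.ball (0 : E) r := Metric.mem_ball_self hr
  have hG₀ : AnalyticAt ℂ G 0 := hG 0 h0
  have hh₀ : AnalyticAt ℂ h (0, 0) := hh _ ⟨Metric.mem_ball_self hr, h0⟩
  have hA : ‖fderiv ℂ G 0‖ < 1 := by
    refine (hG₀.differentiableAt.hasFDerivAt.le_of_lip' (le_max_right κ 0) ?_).trans_lt
      (max_lt hκ1 one_pos)
    filter_upwards [Metric.ball_mem_nhds 0 hr] with y hy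
    exact (hGlip y hy 0 h0).trans (by gcongr; exact le_max_left κ 0)
  have hinv : (fderiv ℂ (fixedPointResidual G h) (0, 0) ∘L .inr ℂ ℂ E).IsInvertible := by
    rw [fderiv_fixedPointResidual_comp_inr hG₀.differentiableAt hh₀.differentiableAt]
    exact ContinuousLinearMap.isInvertible_one_sub_of_norm_lt_one hA
  obtain ⟨ψ, hψ0, hψ, huniq⟩ := (analyticAt_fixedPointResidual hG₀ hh₀).exists_implicitFunction hinv
  have hres0 : fixedPointResidual G h (0, 0) = 0 := by simp [fixedPointResidual, hG0]
  rw [hres0] at hψ huniq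
  obtain ⟨δ, ρ, hδ, hδr, hρ, hρr, hball⟩ :=
    exists_radii_of_eventually hψ.self_of_nhds.1.continuousAt hψ0 hψ huniq hr
  refine ⟨δ, ρ, hδ, hδr, hρ, hρr, ψ, fun x hx => (hball x hx).1.1, hψ0,
    fun x hx => ⟨(hball x hx).2.1, fixedPointResidual_eq_zero_iff.1 (hball x hx).1.2⟩,
    fun x hx y hy hxy => (hball x hx).2.2 y hy (fixedPointResidual_eq_zero_iff.2 hxy)⟩

theorem stmt5 {E : Type*} [NormedAddCommGroup E] [NormedSpace ℂ E] [CompleteSpace E]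
    (r : ℝ) (hr : 0 < r) (κ : ℝ) (hκ0 : 0 < κ) (hκ1 : κ < 1)
    (G : E → E) (hG : AnalyticOnNhd ℂ G (Metric.ball 0 r)) (hG0 : G 0 = 0)
    (hGlip : ∀ y ∈ Metric.ball (0 : E) r, ∀ y' ∈ Metric.ball (0 : E) r,
      ‖G y - G y'‖ ≤ κ * ‖y - y'‖)
    (h : ℂ × E → E)
    (hh : AnalyticOnNhd ℂ h (Metric.ball (0 : ℂ) r ×ˢ Metric.ball (0 : E) r)) :
    ∃ δ ρ : ℝ, 0 < δ ∧ δ < r ∧ 0 < ρ ∧ ρ < r ∧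
      ∃ y : ℂ → E, AnalyticOnNhd ℂ y (Metric.ball 0 δ) ∧ y 0 = 0 ∧
        (∀ x ∈ Metric.ball (0 : ℂ) δ,
          ‖y x‖ < ρ ∧ y x = G (y x) + x • h (x, y x)) ∧
        (∀ x₀ ∈ Metric.ball (0 : ℂ) δ, ∀ y₀ : E, ‖y₀‖ < ρ →
          y₀ = G y₀ + x₀ • h (x₀, y₀) → y₀ = y x₀) :=
  stmt5_general r hr κ hκ1 G hG hG0 hGlip h hh
end

section
/- Let F : B_ℂ(0,r) × B_E(0,r) → ℂ be complex analytic with F(0,y) = 0 for all y ∈ B_E(0,r), and define T(x,y) = (F(x,y), G(y) + x·h(x,y)). Let y : B_ℂ(0,δ) → E be the analytic curve with y(0) = 0 and y(x) = G(y(x)) + x·h(x, y(x)), and set q(x) = F(x, y(x)) − x. Then there exist δ' ∈ (0,δ] and ρ > 0 such that the fixed points of T in B_ℂ(0,δ') × B_E(0,ρ) are exactly the points (x, y(x)) with |x| < δ' and q(x) = 0. In particular, (0,0) is an isolated fixed point of T if and only if q does not vanish identically on any neighborhood of 0 in ℂ. -/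
/-!
Since `G` is a `κ`-contraction and `h` is locally Lipschitz, for small `|x|` the map
`v ↦ G v + x • h (x, v)` is a contraction near `0`, so its only fixed point there is `y x`.
Hence the fixed points of `T` near the origin are the points `(x, y x)` with `q x = 0`, and
`(0, 0)` is isolated exactly when `0` is an isolated zero of the analytic function `q` or not
a zero at all; by the identity theorem this fails only if `q` vanishes near `0`.
-/

open Filter Topology

theorem eq_of_eq_add_smul_of_lipschitz {𝕜 E : Type*} [NormedField 𝕜] [NormedAddCommGroup E]
    [NormedSpace 𝕜 E] {g φ : E → E} {a b : E} {κ K : ℝ} {c : 𝕜}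
    (hg : ‖g a - g b‖ ≤ κ * ‖a - b‖) (hφ : ‖φ a - φ b‖ ≤ K * ‖a - b‖) (hc : κ + ‖c‖ * K < 1)
    (ha : a = g a + c • φ a) (hb : b = g b + c • φ b) : a = b := by
  have hle : ‖a - b‖ ≤ (κ + ‖c‖ * K) * ‖a - b‖ :=
    calc ‖a - b‖ = ‖(g a - g b) + c • (φ a - φ b)‖ := by
          conv_lhs => rw [ha, hb]
          rw [smul_sub]; abel_nf
      _ ≤ ‖g a - g b‖ + ‖c‖ * ‖φ a - φ b‖ := by
          rw [← norm_smul]; exact norm_add_le _ _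
      _ ≤ κ * ‖a - b‖ + ‖c‖ * (K * ‖a - b‖) := by gcongr
      _ = (κ + ‖c‖ * K) * ‖a - b‖ := by ring
  rw [← sub_eq_zero, ← norm_le_zero_iff]
  nlinarith [norm_nonneg (a - b)]

theorem tendsto_graph_nhds_zero {𝕜 E : Type*} [TopologicalSpace 𝕜] [Zero 𝕜]
    [TopologicalSpace E] [Zero E] {y : 𝕜 → E} (hy : ContinuousAt y 0) (hy0 : y 0 = 0) :
    Tendsto (fun x => (x, y x)) (𝓝 0) (𝓝 0) := by
  simpa [ContinuousAt, hy0, Prod.mk_zero_zero] using continuousAt_id.prodMk hy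

theorem eventually_eq_add_smul_iff_eq_curve {𝕜 E : Type*} [RCLike 𝕜] [NormedAddCommGroup E]
    [NormedSpace 𝕜 E] {G : E → E} {h : 𝕜 × E → E} {y : 𝕜 → E} {r κ : ℝ}
    (hr : 0 < r) (hκ : κ < 1)
    (hG : ∀ a ∈ Metric.ball (0 : E) r, ∀ b ∈ Metric.ball (0 : E) r, ‖G a - G b‖ ≤ κ * ‖a - b‖)
    (hh : ContDiffAt 𝕜 1 h 0) (hy : ContinuousAt y 0) (hy0 : y 0 = 0)
    (hcurve : ∀ᶠ x in 𝓝 0, y x = G (y x) + x • h (x, y x)) :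
    ∀ᶠ p : 𝕜 × E in 𝓝 0, (p.2 = G p.2 + p.1 • h p ↔ p.2 = y p.1) := by
  obtain ⟨K, t, ht, hlip⟩ := hh.exists_lipschitzOnWith
  have hfst : Tendsto (Prod.fst : 𝕜 × E → 𝕜) (𝓝 0) (𝓝 0) := continuous_fst.tendsto 0
  have hgraph := (tendsto_graph_nhds_zero hy hy0).comp hfst
  have hball : Metric.ball (0 : E) r ∈ 𝓝 0 := Metric.ball_mem_nhds 0 hr
  have hsmall : ∀ᶠ p : 𝕜 × E in 𝓝 0, κ + ‖p.1‖ * K < 1 := by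
    have : Tendsto (fun p : 𝕜 × E => κ + ‖p.1‖ * K) (𝓝 0) (𝓝 κ) := by
      simpa using ((continuous_norm.comp continuous_fst).tendsto (0 : 𝕜 × E)).mul_const
        (K : ℝ) |>.const_add κ
    exact this.eventually (gt_mem_nhds hκ)
  have hsnd : Tendsto (Prod.snd : 𝕜 × E → E) (𝓝 0) (𝓝 0) := continuous_snd.tendsto 0
  filter_upwards [hsmall, ht, hgraph.eventually ht, hsnd.eventually hball,
    (hsnd.comp hgraph).eventually hball, hfst.eventually hcurve]
    with ⟨u, v⟩ hu hpt hpt' hv hyu hcurve_u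
  dsimp only at *
  refine ⟨fun hfix => ?_, fun hv_eq => hv_eq ▸ hcurve_u⟩
  refine eq_of_eq_add_smul_of_lipschitz (hG _ hv _ hyu) (φ := fun w => h (u, w)) ?_ hu hfix
    hcurve_u
  simpa [Prod.norm_def] using hlip.norm_sub_le hpt hpt'

theorem eventually_fixedPoint_eq_zero_iff {𝕜 E V : Type*} [NontriviallyNormedField 𝕜]
    [TopologicalSpace E] [Zero E] [NormedAddCommGroup V] [NormedSpace 𝕜 V] {T : 𝕜 × E → 𝕜 × E} {y : 𝕜 → E} {q : 𝕜 → V}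
    (hfix : ∀ᶠ p in 𝓝 (0 : 𝕜 × E), (T p = p ↔ p.2 = y p.1 ∧ q p.1 = 0))
    (hy : ContinuousAt y 0) (hy0 : y 0 = 0) (hq : AnalyticAt 𝕜 q 0) :
    (∀ᶠ p in 𝓝 (0 : 𝕜 × E), T p = p → p = 0) ↔ ¬ ∀ᶠ x in 𝓝 (0 : 𝕜), q x = 0 := by
  have hfst : Tendsto (Prod.fst : 𝕜 × E → 𝕜) (𝓝 0) (𝓝 0) := continuous_fst.tendsto 0
  constructor
  · intro hiso hq0
    have hgraph := tendsto_graph_nhds_zero hy hy0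
    have hx0 : ∀ᶠ x in 𝓝 (0 : 𝕜), x = 0 := by
      filter_upwards [hgraph.eventually hiso, hgraph.eventually hfix, hq0]
        with x hiso_x hfix_x hq_x
      exact congrArg Prod.fst (hiso_x (hfix_x.mpr ⟨rfl, hq_x⟩))
    obtain ⟨x, hx, hx_ne⟩ :=
      ((hx0.filter_mono nhdsWithin_le_nhds).and (self_mem_nhdsWithin (s := {0}ᶜ))).exists
    exact hx_ne hx
  · intro hq0
    have hq_ne : ∀ᶠ x in 𝓝 (0 : 𝕜), x ≠ 0 → q x ≠ 0 :=
      eventually_nhdsWithin_iff.mp (hq.eventually_eq_zero_or_eventually_ne_zero.resolve_left hq0)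
    filter_upwards [hfix, hfst.eventually hq_ne] with ⟨u, v⟩ hfix_p hq_u hTp
    obtain ⟨hv, hqu⟩ := hfix_p.mp hTp
    obtain rfl : u = 0 := by_contra fun hu => hq_u hu hqu
    simp only at hv
    rw [hv, hy0, Prod.mk_zero_zero]

theorem stmt6_general {E : Type*} [NormedAddCommGroup E] [NormedSpace ℂ E] [CompleteSpace E]
    (r : ℝ) (hr : 0 < r) (κ : ℝ) (hκ1 : κ < 1)
    (G : E → E)
    (hGlip : ∀ y ∈ Metric.ball (0 : E) r, ∀ y' ∈ Metric.ball (0 : E) r,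
      ‖G y - G y'‖ ≤ κ * ‖y - y'‖)
    (h : ℂ × E → E)
    (hh : AnalyticOnNhd ℂ h (Metric.ball (0 : ℂ) r ×ˢ Metric.ball (0 : E) r))
    (F : ℂ × E → ℂ)
    (hFa : AnalyticOnNhd ℂ F (Metric.ball (0 : ℂ) r ×ˢ Metric.ball (0 : E) r))
    (T : ℂ × E → ℂ × E) (hT : ∀ p : ℂ × E, T p = (F p, G p.2 + p.1 • h p))
    -- the analytic curve `y` with `y 0 = 0` and `y x = G (y x) + x • h (x, y x)`
    (δ : ℝ) (hδ0 : 0 < δ)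
    (y : ℂ → E) (hya : AnalyticOnNhd ℂ y (Metric.ball 0 δ)) (hy0 : y 0 = 0)
    (hycurve : ∀ x ∈ Metric.ball (0 : ℂ) δ,
      y x ∈ Metric.ball (0 : E) r ∧ y x = G (y x) + x • h (x, y x)) :
    ∃ δ' : ℝ, 0 < δ' ∧ δ' ≤ δ ∧ ∃ ρ : ℝ, 0 < ρ ∧
      -- the fixed points of `T` in `B_ℂ(0,δ') × B_E(0,ρ)` are exactly the points
      -- `(x, y x)` with `|x| < δ'` and `q x = 0`, where `q x = F (x, y x) - x`
      (∀ x ∈ Metric.ball (0 : ℂ) δ', ∀ yy ∈ Metric.ball (0 : E) ρ,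
        (T (x, yy) = (x, yy) ↔ yy = y x ∧ F (x, y x) - x = 0)) ∧
      -- in particular, `(0,0)` is an isolated fixed point of `T` iff `q` does not
      -- vanish identically on any neighborhood of `0` in `ℂ`
      ((∃ ε : ℝ, 0 < ε ∧ ∀ p ∈ Metric.ball ((0 : ℂ), (0 : E)) ε, T p = p → p = (0, 0)) ↔
        ¬ ∃ ε : ℝ, 0 < ε ∧ ∀ x ∈ Metric.ball (0 : ℂ) ε, F (x, y x) - x = 0) := by
  have hya0 : AnalyticAt ℂ y 0 := hya 0 (Metric.mem_ball_self hδ0)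
  have hcurve : ∀ᶠ x in 𝓝 (0 : ℂ), y x = G (y x) + x • h (x, y x) :=
    Filter.mem_of_superset (Metric.ball_mem_nhds 0 hδ0) fun x hx => (hycurve x hx).2
  have hcontr := eventually_eq_add_smul_iff_eq_curve hr hκ1 hGlip
    (hh 0 ⟨Metric.mem_ball_self hr, Metric.mem_ball_self hr⟩).contDiffAt hya0.continuousAt hy0
    hcurve
  have hfix : ∀ᶠ p in 𝓝 (0 : ℂ × E), (T p = p ↔ p.2 = y p.1 ∧ F (p.1, y p.1) - p.1 = 0) := by
    filter_upwards [hcontr] with ⟨x, v⟩ hxv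
    rw [hT, Prod.ext_iff, sub_eq_zero, eq_comm (b := v)]
    dsimp only at hxv ⊢
    rw [hxv]
    constructor
    · rintro ⟨hF, rfl⟩
      exact ⟨rfl, hF⟩
    · rintro ⟨rfl, hF⟩
      exact ⟨hF, rfl⟩
  have hq : AnalyticAt ℂ (fun x => F (x, y x) - x) 0 := by
    have hF0 : AnalyticAt ℂ F (0, y 0) := by
      rw [hy0]
      exact hFa _ ⟨Metric.mem_ball_self hr, Metric.mem_ball_self hr⟩
    exact (hF0.comp (f := fun x => (x, y x)) (analyticAt_id.prod hya0)).sub analyticAt_id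
  obtain ⟨ε, hε, hε_fix⟩ := Metric.eventually_nhds_iff_ball.mp hfix
  refine ⟨min δ ε, lt_min hδ0 hε, min_le_left _ _, ε, hε, fun x hx v hv => hε_fix (x, v) ?_, ?_⟩
  · rw [← ball_prod_same]
    exact ⟨Metric.ball_subset_ball (min_le_right _ _) hx, hv⟩
  · simp only [Prod.mk_zero_zero]
    exact Metric.eventually_nhds_iff_ball.symm.trans
      ((eventually_fixedPoint_eq_zero_iff hfix hya0.continuousAt hy0 hq).trans
        (not_congr Metric.eventually_nhds_iff_ball))

theorem stmt6 {E : Type*} [NormedAddCommGroup E] [NormedSpace ℂ E] [CompleteSpace E]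
    (r : ℝ) (hr : 0 < r) (κ : ℝ) (hκ0 : 0 < κ) (hκ1 : κ < 1)
    (G : E → E) (hG : AnalyticOnNhd ℂ G (Metric.ball 0 r)) (hG0 : G 0 = 0)
    (hGlip : ∀ y ∈ Metric.ball (0 : E) r, ∀ y' ∈ Metric.ball (0 : E) r,
      ‖G y - G y'‖ ≤ κ * ‖y - y'‖)
    (h : ℂ × E → E)
    (hh : AnalyticOnNhd ℂ h (Metric.ball (0 : ℂ) r ×ˢ Metric.ball (0 : E) r))
    (F : ℂ × E → ℂ)
    (hFa : AnalyticOnNhd ℂ F (Metric.ball (0 : ℂ) r ×ˢ Metric.ball (0 : E) r))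
    (hF0 : ∀ yy ∈ Metric.ball (0 : E) r, F (0, yy) = 0)
    (T : ℂ × E → ℂ × E) (hT : ∀ p : ℂ × E, T p = (F p, G p.2 + p.1 • h p))
    -- the analytic curve `y` with `y 0 = 0` and `y x = G (y x) + x • h (x, y x)`
    (δ : ℝ) (hδ0 : 0 < δ) (hδr : δ ≤ r)
    (y : ℂ → E) (hya : AnalyticOnNhd ℂ y (Metric.ball 0 δ)) (hy0 : y 0 = 0)
    (hycurve : ∀ x ∈ Metric.ball (0 : ℂ) δ,
      y x ∈ Metric.ball (0 : E) r ∧ y x = G (y x) + x • h (x, y x)) :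
    ∃ δ' : ℝ, 0 < δ' ∧ δ' ≤ δ ∧ ∃ ρ : ℝ, 0 < ρ ∧
      -- the fixed points of `T` in `B_ℂ(0,δ') × B_E(0,ρ)` are exactly the points
      -- `(x, y x)` with `|x| < δ'` and `q x = 0`, where `q x = F (x, y x) - x`
      (∀ x ∈ Metric.ball (0 : ℂ) δ', ∀ yy ∈ Metric.ball (0 : E) ρ,
        (T (x, yy) = (x, yy) ↔ yy = y x ∧ F (x, y x) - x = 0)) ∧
      -- in particular, `(0,0)` is an isolated fixed point of `T` iff `q` does not
      -- vanish identically on any neighborhood of `0` in `ℂ`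
      ((∃ ε : ℝ, 0 < ε ∧ ∀ p ∈ Metric.ball ((0 : ℂ), (0 : E)) ε, T p = p → p = (0, 0)) ↔
        ¬ ∃ ε : ℝ, 0 < ε ∧ ∀ x ∈ Metric.ball (0 : ℂ) ε, F (x, y x) - x = 0) :=
  stmt6_general r hr κ hκ1 G hGlip h hh F hFa T hT δ hδ0 y hya hy0 hycurve
end

section
/- Let Ω ⊆ ℂ be a connected open set, δ > 0, and let q : Ω × B_ℂ(0,δ) → ℂ be a (jointly) complex analytic function such that q(λ, 0) = 0 for every λ ∈ Ω, and suppose there exists δ' ∈ (0,δ) such that for every λ ∈ Ω, q(λ, x) ≠ 0 whenever 0 < |x| ≤ δ'. Then the order of vanishing at x = 0 of the one-variable analytic function x ↦ q(λ, x) is finite and is the same for all λ ∈ Ω. -/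
open Filter Topology Metric Complex Real

/-!
By the argument principle, the order of vanishing of `q λ` at `0` equals
`(2πi)⁻¹ ∮_{|x| = δ'} ∂ₓq(λ, x) / q(λ, x) dx`, because `0` is the only zero of `q λ` in the closed
disc of radius `δ'`. The integrand is jointly continuous in `(λ, x)` on `Ω × {|x| = δ'}`, so this
natural-number-valued function of `λ` is continuous, hence constant on the connected set `Ω`.
-/

section

variable {𝕜 E : Type*} [NontriviallyNormedField 𝕜] [NormedAddCommGroup E] [NormedSpace 𝕜 E]

theorem analyticOrderAt_ne_top_of_ne_zero_on_closedBall {f : 𝕜 → E} {c : 𝕜} {R : ℝ} (hR : 0 < R)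
    (hne : ∀ z ∈ closedBall c R, z ≠ c → f z ≠ 0) : analyticOrderAt f c ≠ ⊤ := by
  rw [Ne, analyticOrderAt_eq_top]
  intro hzero
  have hpunct : ∀ᶠ z in 𝓝[≠] c, f z ≠ 0 :=
    (eventually_nhdsWithin_of_eventually_nhds (closedBall_mem_nhds c hR)).and self_mem_nhdsWithin
      |>.mono fun z ⟨hz, hzc⟩ => hne z hz hzc
  obtain ⟨z, hz0, hz⟩ := ((hzero.filter_mono nhdsWithin_le_nhds).and hpunct).exists
  exact hz hz0

theorem AnalyticOnNhd.exists_eq_pow_smul_of_analyticOrderAt_eq {f : 𝕜 → E} {s : Set 𝕜} {c : 𝕜}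
    {m : ℕ} (hf : AnalyticOnNhd 𝕜 f s) (hc : c ∈ s) (hm : analyticOrderAt f c = m) :
    ∃ g : 𝕜 → E, AnalyticOnNhd 𝕜 g s ∧ g c ≠ 0 ∧ ∀ z, f z = (z - c) ^ m • g z := by
  obtain ⟨g₀, hg₀, hg₀c, hfg₀⟩ := (hf c hc).analyticOrderAt_eq_natCast.1 hm
  classical
  set g := Function.update (fun z => ((z - c) ^ m)⁻¹ • f z) c (g₀ c)
  have hfg : ∀ z, f z = (z - c) ^ m • g z := by
    intro z
    rcases eq_or_ne z c with rfl | hz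
    · simpa [g] using hfg₀.self_of_nhds
    · simp [g, hz, smul_inv_smul₀ (pow_ne_zero m (sub_ne_zero.2 hz))]
  refine ⟨g, fun z hz => ?_, by simpa [g] using hg₀c, hfg⟩
  rcases eq_or_ne z c with rfl | hzc
  · refine hg₀.congr ?_
    filter_upwards [hfg₀] with w hw
    rcases eq_or_ne w z with rfl | hwz
    · simp [g]
    · have := (hfg w).symm.trans hw
      exact (smul_right_injective E (pow_ne_zero m (sub_ne_zero.2 hwz)) this).symm
  · refine (((analyticAt_id.sub analyticAt_const).pow m).inv
      (pow_ne_zero m (sub_ne_zero.2 hzc))).smul (hf z hz) |>.congr ?_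
    filter_upwards [eventually_ne_nhds hzc] with w hw
    simp [g, hw]

theorem AnalyticAt.continuousAt_deriv_snd {F : Type*} [NormedAddCommGroup F] [NormedSpace 𝕜 F]
    [CompleteSpace E] {Q : F × 𝕜 → E} {p : F × 𝕜} (hQ : AnalyticAt 𝕜 Q p) :
    ContinuousAt (fun p : F × 𝕜 => deriv (fun z => Q (p.1, z)) p.2) p := by
  refine (hQ.fderiv.continuousAt.clm_apply (continuousAt_const (y := ((0 : F), (1 : 𝕜))))).congr ?_
  filter_upwards [hQ.eventually_analyticAt] with p' hp'
  exact ((hp'.differentiableAt.hasFDerivAt).comp_hasDerivAt p'.2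
    ((hasDerivAt_const p'.2 p'.1).prodMk (hasDerivAt_id p'.2))).deriv.symm

end

theorem circleIntegral_logDeriv_eq_analyticOrderNatAt {f : ℂ → ℂ} {c : ℂ} {R : ℝ} (hR : 0 < R)
    (hf : AnalyticOnNhd ℂ f (closedBall c R)) (hne : ∀ z ∈ closedBall c R, z ≠ c → f z ≠ 0) :
    ∮ z in C(c, R), logDeriv f z = 2 * π * I * analyticOrderNatAt f c := by
  set m := analyticOrderNatAt f c
  obtain ⟨g, hg, hgc, hfg⟩ := hf.exists_eq_pow_smul_of_analyticOrderAt_eq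
    (mem_closedBall_self hR.le) (Nat.cast_analyticOrderNatAt
      (analyticOrderAt_ne_top_of_ne_zero_on_closedBall hR hne)).symm
  have hg0 : ∀ z ∈ closedBall c R, g z ≠ 0 := by
    intro z hz hgz
    rcases eq_or_ne z c with rfl | hzc
    · exact hgc hgz
    · exact hne z hz hzc (by rw [hfg, hgz, smul_zero])
  have hlogg : AnalyticOnNhd ℂ (logDeriv g) (closedBall c R) := fun z hz =>
    (hg z hz).deriv.div (hg z hz) (hg0 z hz)
  have hsplit : Set.EqOn (logDeriv f) (fun z => m * (z - c)⁻¹ + logDeriv g z) (sphere c R) := by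
    intro z hz
    have hzc : z - c ≠ 0 := sub_ne_zero.2 (ne_of_mem_sphere hz hR.ne')
    have hz' := sphere_subset_closedBall hz
    rw [show f = fun z => (z - c) ^ m * g z from funext hfg,
      logDeriv_mul (f := fun z => (z - c) ^ m) z (pow_ne_zero m hzc) (hg0 z hz') (by fun_prop)
        (hg z hz').differentiableAt,
      logDeriv_fun_pow (by fun_prop), logDeriv_apply]
    simp [div_eq_mul_inv]
  have hcauchy : ∮ z in C(c, R), logDeriv g z = 0 := by
    refine DiffContOnCl.circleIntegral_eq_zero hR.le (DifferentiableOn.diffContOnCl ?_)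
    rw [closure_ball c hR.ne']
    exact hlogg.differentiableOn
  rw [circleIntegral.integral_congr hR.le hsplit, circleIntegral.integral_add, hcauchy,
    circleIntegral.integral_const_mul,
    circleIntegral.integral_sub_inv_of_mem_ball (mem_ball_self hR)]
  · ring
  · exact (continuousOn_const.mul ((continuousOn_id.sub continuousOn_const).inv₀ fun z hz =>
      sub_ne_zero.2 (ne_of_mem_sphere hz hR.ne'))).circleIntegrable hR.le
  · exact (hlogg.continuousOn.mono sphere_subset_closedBall).circleIntegrable hR.le

theorem ContinuousOn.circleIntegral {X E : Type*} [TopologicalSpace X] [NormedAddCommGroup E]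
    [NormedSpace ℂ E] [CompleteSpace E] {F : X → ℂ → E} {s : Set X} {c : ℂ} {R : ℝ} (hR : 0 ≤ R)
    (hF : ContinuousOn (Function.uncurry F) (s ×ˢ sphere c R)) :
    ContinuousOn (fun x => ∮ z in C(c, R), F x z) s := by
  rw [continuousOn_iff_continuous_domRestrict]
  refine intervalIntegral.continuous_parametric_intervalIntegral_of_continuous'
    (f := fun (x : s) θ => deriv (circleMap c R) θ • F x (circleMap c R θ)) ?_ 0 (2 * π)
  simp only [deriv_circleMap]
  refine (((continuous_circleMap 0 R).comp continuous_snd).mul continuous_const).smul ?_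
  exact hF.comp_continuous ((continuous_subtype_val.comp continuous_fst).prodMk
    ((continuous_circleMap c R).comp continuous_snd)) fun x => ⟨x.1.2, circleMap_mem_sphere c hR _⟩

theorem IsPreconnected.eq_of_continuousOn_natCast {X : Type*} [TopologicalSpace X] {s : Set X}
    (hs : IsPreconnected s) {μ : X → ℕ} (hμ : ContinuousOn (fun x => (μ x : ℂ)) s) {x y : X}
    (hx : x ∈ s) (hy : y ∈ s) : μ x = μ y := by
  have hemb : Topology.IsEmbedding (fun n : ℕ => (n : ℂ)) :=
    isometry_ofReal.isEmbedding.comp Nat.isClosedEmbedding_coe_real.isEmbedding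
  exact hs.constant (hemb.continuousOn_iff.2 hμ) hx hy

theorem stmt9_general (Ω : Set ℂ) (hΩc : IsConnected Ω)
    (δ : ℝ) (q : ℂ → ℂ → ℂ)
    (hq : AnalyticOnNhd ℂ (fun p : ℂ × ℂ => q p.1 p.2) (Ω ×ˢ Metric.ball 0 δ))
    (δ' : ℝ) (hδ'0 : 0 < δ') (hδ'δ : δ' < δ)
    (hnz : ∀ lam ∈ Ω, ∀ x : ℂ, 0 < ‖x‖ → ‖x‖ ≤ δ' → q lam x ≠ 0) :
    -- the order of vanishing at `x = 0` of `x ↦ q lam x` is finite and the same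
    -- for all `lam ∈ Ω`
    ∃ m : ℕ, ∀ lam ∈ Ω,
      (∀ j < m, iteratedDeriv j (q lam) 0 = 0) ∧ iteratedDeriv m (q lam) 0 ≠ 0 := by
  have hslice : ∀ lam ∈ Ω, AnalyticOnNhd ℂ (q lam) (closedBall 0 δ') := fun lam hlam z hz =>
    (hq (lam, z) ⟨hlam, closedBall_subset_ball hδ'δ hz⟩).comp (analyticAt_const.prod analyticAt_id)
  have hne : ∀ lam ∈ Ω, ∀ z ∈ closedBall (0 : ℂ) δ', z ≠ 0 → q lam z ≠ 0 :=
    fun lam hlam z hz hz0 => hnz lam hlam z (norm_pos_iff.2 hz0) (mem_closedBall_zero_iff.1 hz)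
  have hcont : ContinuousOn (fun lam => ∮ z in C(0, δ'), logDeriv (q lam) z) Ω := by
    refine ContinuousOn.circleIntegral hδ'0.le fun p hp => ?_
    have hpq := hq p ⟨hp.1, sphere_subset_ball hδ'δ hp.2⟩
    have hp0 := hne p.1 hp.1 p.2 (sphere_subset_closedBall hp.2) (ne_of_mem_sphere hp.2 hδ'0.ne')
    exact (hpq.continuousAt_deriv_snd.div hpq.continuousAt hp0).continuousWithinAt
  have hwinding : ∀ lam ∈ Ω, (analyticOrderNatAt (q lam) 0 : ℂ) =
      (∮ z in C(0, δ'), logDeriv (q lam) z) / (2 * π * I) := by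
    intro lam hlam
    rw [circleIntegral_logDeriv_eq_analyticOrderNatAt hδ'0 (hslice lam hlam) (hne lam hlam)]
    field_simp
  have horder : ∀ lam ∈ Ω, ∀ lam' ∈ Ω,
      analyticOrderNatAt (q lam) 0 = analyticOrderNatAt (q lam') 0 := fun lam hlam lam' hlam' =>
    hΩc.isPreconnected.eq_of_continuousOn_natCast ((hcont.div_const _).congr hwinding) hlam hlam'
  obtain ⟨lam₀, hlam₀⟩ := hΩc.nonempty
  refine ⟨analyticOrderNatAt (q lam₀) 0, fun lam hlam => ?_⟩
  rw [← analyticOrderAt_eq_nat_iff_iteratedDeriv_eq_zero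
      (hslice lam hlam 0 (mem_closedBall_self hδ'0.le)), ← horder lam hlam lam₀ hlam₀,
    Nat.cast_analyticOrderNatAt
      (analyticOrderAt_ne_top_of_ne_zero_on_closedBall hδ'0 (hne lam hlam))]

theorem stmt9 (Ω : Set ℂ) (hΩo : IsOpen Ω) (hΩc : IsConnected Ω)
    (δ : ℝ) (hδ : 0 < δ) (q : ℂ → ℂ → ℂ)
    (hq : AnalyticOnNhd ℂ (fun p : ℂ × ℂ => q p.1 p.2) (Ω ×ˢ Metric.ball 0 δ))
    (hq0 : ∀ lam ∈ Ω, q lam 0 = 0)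
    (δ' : ℝ) (hδ'0 : 0 < δ') (hδ'δ : δ' < δ)
    (hnz : ∀ lam ∈ Ω, ∀ x : ℂ, 0 < ‖x‖ → ‖x‖ ≤ δ' → q lam x ≠ 0) :
    -- the order of vanishing at `x = 0` of `x ↦ q lam x` is finite and the same
    -- for all `lam ∈ Ω`
    ∃ m : ℕ, ∀ lam ∈ Ω,
      (∀ j < m, iteratedDeriv j (q lam) 0 = 0) ∧ iteratedDeriv m (q lam) 0 ≠ 0 :=
  stmt9_general Ω hΩc δ q hq δ' hδ'0 hδ'δ hnz
end

section
/- Assume C/R^α < 1/2 and κρ + C/R^α < ρ. Then T(Ω) ⊆ Ω, and for every (x₀, y₀) ∈ Ω, writing (xₙ, yₙ) = Tⁿ(x₀, y₀), one has: Re xₙ ≥ Re x₀ + n/2 for all n ≥ 0, xₙ/n → 1 as n → ∞, and ‖yₙ‖ → 0 as n → ∞. -/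
/-!
Since `C / R ^ α < 1 / 2`, each step moves `Re x` to the right by at least `1 / 2`, and the
`y`-component obeys `‖yₙ₊₁‖ ≤ κ ‖yₙ‖ + C / ‖xₙ‖ ^ α`, which keeps it in the ball by
`κ ρ + C / R ^ α < ρ`. As `Re xₙ → ∞` the error terms `C / ‖xₙ‖ ^ α` tend to zero, so the increments
`xₙ₊₁ - xₙ = 1 + uₙ` tend to `1` (Cesàro gives `xₙ / n → 1`), and a contraction perturbed by a
vanishing error drives `‖yₙ‖` to zero.
-/

open Filter Topology Finset

theorem add_mul_le_of_add_le_succ {f : ℕ → ℝ} {c : ℝ} (h : ∀ n, f n + c ≤ f (n + 1)) (n : ℕ) :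
    f 0 + n * c ≤ f n := by
  induction n with
  | zero => simp
  | succ n ih => push_cast; linarith [h n]

theorem le_pow_mul_add_div_of_le_mul_add {a : ℕ → ℝ} {κ δ : ℝ} {N : ℕ} (hκ0 : 0 ≤ κ)
    (hκ1 : κ < 1) (hδ : 0 ≤ δ) (h : ∀ n ≥ N, a (n + 1) ≤ κ * a n + δ) (k : ℕ) :
    a (N + k) ≤ κ ^ k * a N + δ / (1 - κ) := by
  have hκ : 0 < 1 - κ := sub_pos.2 hκ1
  induction k with
  | zero => simpa using div_nonneg hδ hκ.le
  | succ k ih =>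
    have hgeom : κ * (δ / (1 - κ)) + δ = δ / (1 - κ) := by field_simp; ring
    calc a (N + (k + 1)) ≤ κ * a (N + k) + δ := h _ (Nat.le_add_right N k)
      _ ≤ κ * (κ ^ k * a N + δ / (1 - κ)) + δ := by gcongr
      _ = κ ^ (k + 1) * a N + δ / (1 - κ) := by rw [mul_add, add_assoc, hgeom]; ring

theorem tendsto_zero_of_le_mul_add {a b : ℕ → ℝ} {κ : ℝ} (hκ0 : 0 ≤ κ) (hκ1 : κ < 1)
    (ha : ∀ n, 0 ≤ a n) (h : ∀ n, a (n + 1) ≤ κ * a n + b n) (hb : Tendsto b atTop (𝓝 0)) :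
    Tendsto a atTop (𝓝 0) := by
  refine tendsto_order.2 ⟨fun c hc => .of_forall fun n => hc.trans_le (ha n), fun ε hε => ?_⟩
  have hκ : 0 < 1 - κ := sub_pos.2 hκ1
  obtain ⟨N, hN⟩ :=
    eventually_atTop.1 (hb.eventually (ge_mem_nhds (by positivity : 0 < (1 - κ) * (ε / 2))))
  have hgeom : Tendsto (fun k => κ ^ k * a N) atTop (𝓝 0) := by
    simpa using (tendsto_pow_atTop_nhds_zero_of_lt_one hκ0 hκ1).mul_const (a N)
  obtain ⟨K, hK⟩ := eventually_atTop.1 (hgeom.eventually (gt_mem_nhds (half_pos hε)))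
  filter_upwards [eventually_ge_atTop (N + K)] with n hn
  obtain ⟨k, rfl⟩ := Nat.exists_eq_add_of_le ((Nat.le_add_right N K).trans hn)
  have hbound := le_pow_mul_add_div_of_le_mul_add (δ := (1 - κ) * (ε / 2)) hκ0 hκ1
    (by positivity) (fun n hn => (h n).trans (by linarith [hN n hn])) k
  rw [mul_div_cancel_left₀ _ hκ.ne'] at hbound
  linarith [hK k (by omega)]

theorem tendsto_inv_smul_of_tendsto_sub {E : Type*} [NormedAddCommGroup E] [NormedSpace ℝ E]
    {x : ℕ → E} {l : E} (h : Tendsto (fun n => x (n + 1) - x n) atTop (𝓝 l)) :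
    Tendsto (fun n : ℕ => (n⁻¹ : ℝ) • x n) atTop (𝓝 l) := by
  have hinit : Tendsto (fun n : ℕ => (n⁻¹ : ℝ) • x 0) atTop (𝓝 0) := by
    simpa using
      (tendsto_inv_atTop_zero.comp (tendsto_natCast_atTop_atTop (R := ℝ))).smul_const (x 0)
  have hsum := hinit.add h.cesaro_smul
  rw [zero_add] at hsum
  refine hsum.congr fun n => ?_
  rw [sum_range_sub, ← smul_add, add_sub_cancel]

theorem tendsto_div_natCast_of_tendsto_sub {𝕜 : Type*} [RCLike 𝕜] {x : ℕ → 𝕜} {l : 𝕜}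
    (h : Tendsto (fun n => x (n + 1) - x n) atTop (𝓝 l)) :
    Tendsto (fun n : ℕ => x n / n) atTop (𝓝 l) := by
  simpa [RCLike.real_smul_eq_coe_mul, div_eq_inv_mul] using tendsto_inv_smul_of_tendsto_sub h

theorem div_norm_rpow_le_div_rpow {C R α : ℝ} {x : ℂ} (hC : 0 ≤ C) (hR : 0 < R) (hα : 0 ≤ α)
    (hx : R < x.re) : C / ‖x‖ ^ α ≤ C / R ^ α :=
  div_le_div_of_nonneg_left hC (Real.rpow_pos_of_pos hR α)
    (Real.rpow_le_rpow hR.le (hx.le.trans (Complex.re_le_norm x)) hα)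

theorem tendsto_div_norm_rpow_of_tendsto_re {ι : Type*} {l : Filter ι} {z : ι → ℂ} {α : ℝ}
    (hα : 0 < α) (hz : Tendsto (fun i => (z i).re) l atTop) (C : ℝ) :
    Tendsto (fun i => C / ‖z i‖ ^ α) l (𝓝 0) :=
  tendsto_const_nhds.div_atTop
    ((tendsto_rpow_atTop hα).comp (tendsto_atTop_mono (fun _ => Complex.re_le_norm _) hz))

theorem re_add_half_le_re_add_one_add {x u : ℂ} (hu : ‖u‖ ≤ 1 / 2) :
    x.re + 1 / 2 ≤ (x + 1 + u).re := by
  simp only [Complex.add_re, Complex.one_re]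
  linarith [neg_abs_le u.re, Complex.abs_re_le_norm u]

theorem normalForm_step {E : Type*} [NormedAddCommGroup E] {α κ C ρ R : ℝ} {x u : ℂ}
    {y w Gy : E} (hα : 0 ≤ α) (hκ : 0 ≤ κ) (hC : 0 ≤ C) (hR : 0 < R)
    (h1 : C / R ^ α < 1 / 2) (h2 : κ * ρ + C / R ^ α < ρ) (hx : R < x.re) (hy : ‖y‖ < ρ)
    (hGy : ‖Gy‖ ≤ κ * ‖y‖) (hu : ‖u‖ ≤ C / ‖x‖ ^ α) (hw : ‖w‖ ≤ C / ‖x‖ ^ α) :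
    x.re + 1 / 2 ≤ (x + 1 + u).re ∧ ‖Gy + w‖ ≤ κ * ‖y‖ + C / ‖x‖ ^ α ∧ ‖Gy + w‖ < ρ := by
  have hbound := div_norm_rpow_le_div_rpow hC hR hα hx
  have hnorm : ‖Gy + w‖ ≤ κ * ‖y‖ + C / ‖x‖ ^ α := (norm_add_le _ _).trans (add_le_add hGy hw)
  refine ⟨re_add_half_le_re_add_one_add ((hu.trans hbound).trans h1.le), hnorm, ?_⟩
  calc ‖Gy + w‖ ≤ κ * ‖y‖ + C / ‖x‖ ^ α := hnorm
    _ ≤ κ * ρ + C / R ^ α := add_le_add (mul_le_mul_of_nonneg_left hy.le hκ) hbound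
    _ < ρ := h2

theorem stmt10_general {E : Type*} [NormedAddCommGroup E]
    (α κ C ρ R : ℝ) (hα : 0 < α) (hκ0 : 0 < κ) (hκ1 : κ < 1) (hC : 0 < C)
    (hR : 0 < R)
    (Ω : Set (ℂ × E)) (hΩ : Ω = {p : ℂ × E | R < p.1.re ∧ ‖p.2‖ < ρ})
    (G : E → E) (hGκ : ∀ y : E, ‖y‖ < ρ → ‖G y‖ ≤ κ * ‖y‖)
    (u : ℂ × E → ℂ) (w : ℂ × E → E)
    (hu : ∀ p ∈ Ω, ‖u p‖ ≤ C / ‖p.1‖ ^ α)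
    (hw : ∀ p ∈ Ω, ‖w p‖ ≤ C / ‖p.1‖ ^ α)
    (T : ℂ × E → ℂ × E) (hT : ∀ p ∈ Ω, T p = (p.1 + 1 + u p, G p.2 + w p))
    (h1 : C / R ^ α < 1 / 2) (h2 : κ * ρ + C / R ^ α < ρ) :
    Set.MapsTo T Ω Ω ∧
    ∀ p ∈ Ω,
      (∀ n : ℕ, p.1.re + n / 2 ≤ ((T^[n] p).1).re) ∧
      Tendsto (fun n : ℕ => (T^[n] p).1 / (n : ℂ)) atTop (𝓝 1) ∧
      Tendsto (fun n : ℕ => ‖(T^[n] p).2‖) atTop (𝓝 0) := by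
  subst hΩ
  set Ω := {p : ℂ × E | R < p.1.re ∧ ‖p.2‖ < ρ}
  have hstep : ∀ p ∈ Ω, p.1.re + 1 / 2 ≤ (T p).1.re ∧
      ‖(T p).2‖ ≤ κ * ‖p.2‖ + C / ‖p.1‖ ^ α ∧ ‖(T p).2‖ < ρ := fun p hp => by
    rw [hT p hp]
    exact normalForm_step hα.le hκ0.le hC.le hR h1 h2 hp.1 hp.2 (hGκ _ hp.2) (hu p hp) (hw p hp)
  have hmaps : Set.MapsTo T Ω Ω := fun p hp =>
    ⟨by linarith [(hstep p hp).1, hp.1], (hstep p hp).2.2⟩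
  refine ⟨hmaps, fun p hp => ?_⟩
  have horbit (n : ℕ) := hmaps.iterate n hp
  have hgrowth (n : ℕ) : p.1.re + n / 2 ≤ (T^[n] p).1.re := by
    rw [← mul_one_div]
    exact add_mul_le_of_add_le_succ (f := fun n => (T^[n] p).1.re)
      (fun n => by rw [Function.iterate_succ_apply']; exact (hstep _ (horbit n)).1) n
  have herr := tendsto_div_norm_rpow_of_tendsto_re hα (tendsto_atTop_mono hgrowth
    (tendsto_atTop_add_const_left _ _ (tendsto_natCast_atTop_atTop.atTop_div_const two_pos))) C
  refine ⟨hgrowth, tendsto_div_natCast_of_tendsto_sub ?_, tendsto_zero_of_le_mul_add hκ0.le hκ1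
    (fun _ => norm_nonneg _) (fun n => ?_) herr⟩
  · have hu0 := squeeze_zero_norm (fun n => hu _ (horbit n)) herr
    have hincr (n : ℕ) : (T^[n + 1] p).1 - (T^[n] p).1 = 1 + u (T^[n] p) := by
      rw [Function.iterate_succ_apply', hT _ (horbit n)]; ring
    simpa only [hincr, add_zero] using tendsto_const_nhds.add hu0
  · rw [Function.iterate_succ_apply']
    exact (hstep _ (horbit n)).2.1

theorem stmt10 {E : Type*} [NormedAddCommGroup E] [NormedSpace ℂ E] [CompleteSpace E]
    (α κ C ρ R : ℝ) (hα : 0 < α) (hκ0 : 0 < κ) (hκ1 : κ < 1) (hC : 0 < C)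
    (hρ : 0 < ρ) (hR : 0 < R)
    (Ω : Set (ℂ × E)) (hΩ : Ω = {p : ℂ × E | R < p.1.re ∧ ‖p.2‖ < ρ})
    (G : E → E) (hG0 : G 0 = 0) (hGκ : ∀ y : E, ‖y‖ < ρ → ‖G y‖ ≤ κ * ‖y‖)
    (u : ℂ × E → ℂ) (w : ℂ × E → E)
    (hu : ∀ p ∈ Ω, ‖u p‖ ≤ C / ‖p.1‖ ^ α)
    (hw : ∀ p ∈ Ω, ‖w p‖ ≤ C / ‖p.1‖ ^ α)
    (T : ℂ × E → ℂ × E) (hT : ∀ p ∈ Ω, T p = (p.1 + 1 + u p, G p.2 + w p))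
    (h1 : C / R ^ α < 1 / 2) (h2 : κ * ρ + C / R ^ α < ρ) :
    Set.MapsTo T Ω Ω ∧
    ∀ p ∈ Ω,
      (∀ n : ℕ, p.1.re + n / 2 ≤ ((T^[n] p).1).re) ∧
      Tendsto (fun n : ℕ => (T^[n] p).1 / (n : ℂ)) atTop (𝓝 1) ∧
      Tendsto (fun n : ℕ => ‖(T^[n] p).2‖) atTop (𝓝 0) :=
  stmt10_general α κ C ρ R hα hκ0 hκ1 hC hR Ω hΩ G hGκ u w hu hw T hT h1 h2
end

section
/- Let T be a compact continuous linear operator on a complex Banach space B, let E ⊆ B be a closed subspace with T(E) ⊆ E and of codimension one (there is v ∈ B \ E with B = E + ℂ·v), and suppose the spectral radius of the restriction of T to E is strictly smaller than 1 while the spectral radius of T is at least 1. Then there is exactly one spectral value μ of T with |μ| ≥ 1, and μ is an eigenvalue of T (there is a nonzero w ∈ B with T w = μ·w). -/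
open Filter Topology

set_option maxHeartbeats 1000000 in
theorem stmt12 {B : Type*} [NormedAddCommGroup B] [NormedSpace ℂ B] [CompleteSpace B]
    (T : B →L[ℂ] B) (hT : IsCompactOperator T)
    (E : Submodule ℂ B) (hEc : IsClosed (E : Set B))
    (hinv : ∀ x ∈ E, T x ∈ E)
    (v : B) (hv : v ∉ E) (hspan : ∀ x : B, ∃ a : ℂ, ∃ y ∈ E, x = a • v + y)
    (hres : spectralRadius ℂ ((T.comp E.subtypeL).codRestrict E (fun x => hinv x x.2)) < 1)
    (hrad : 1 ≤ spectralRadius ℂ T) :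
    ∃ μ : ℂ, μ ∈ spectrum ℂ T ∧ 1 ≤ ‖μ‖ ∧
      (∀ μ' ∈ spectrum ℂ T, 1 ≤ ‖μ'‖ → μ' = μ) ∧
      ∃ w : B, w ≠ 0 ∧ T w = μ • w := by
  classical
  haveI : CompleteSpace E := hEc.completeSpace_coe
  set TE : E →L[ℂ] E := (T.comp E.subtypeL).codRestrict E (fun x => hinv x x.2) with hTEdef
  -- decomposition of T v
  obtain ⟨μ₀, e, heE, hTv⟩ := hspan (T v)
  -- uniqueness of the coefficient
  have huniq : ∀ (a : ℂ) (y : B), y ∈ E → a • v + y ∈ E → a = 0 := by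
    intro a y hy h
    by_contra ha
    apply hv
    have : v = a⁻¹ • ((a • v + y) - y) := by
      rw [add_sub_cancel_right, smul_smul, inv_mul_cancel₀ ha, one_smul]
    rw [this]
    exact E.smul_mem _ (E.sub_mem h hy)
  -- invertibility on E for |μ'| ≥ 1
  have hE_unit : ∀ μ' : ℂ, 1 ≤ ‖μ'‖ → IsUnit (algebraMap ℂ (E →L[ℂ] E) μ' - TE) := by
    intro μ' h
    have h1 : (1 : ENNReal) ≤ (‖μ'‖₊ : ENNReal) := by
      rw [← ENNReal.coe_one, ENNReal.coe_le_coe]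
      exact_mod_cast h
    exact @spectrum.mem_resolventSet_of_spectralRadius_lt ℂ (E →L[ℂ] E) _ _ _ _ μ'
      (lt_of_lt_of_le hres h1)
  -- coercion computation
  have hSEapp : ∀ (μ' : ℂ) (z : E),
      ((algebraMap ℂ (E →L[ℂ] E) μ' - TE) z : B) = μ' • (z : B) - T z := by
    intro μ' z
    rw [ContinuousLinearMap.sub_apply, Algebra.algebraMap_eq_smul_one,
      ContinuousLinearMap.smul_apply, ContinuousLinearMap.one_apply, Submodule.coe_sub,
      Submodule.coe_smul]
    rfl
  -- solving (μ' - T) z = c in E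
  have hsolve : ∀ (μ' : ℂ), 1 ≤ ‖μ'‖ → ∀ c : B, c ∈ E →
      ∃ z ∈ E, μ' • z - T z = c := by
    intro μ' h c hc
    have hu := hE_unit μ' h
    set z : E := (hu.unit⁻¹ : (E →L[ℂ] E)ˣ).val ⟨c, hc⟩ with hzdef
    refine ⟨z, z.2, ?_⟩
    have h2 : ((hu.unit : E →L[ℂ] E) * (hu.unit⁻¹ : (E →L[ℂ] E)ˣ).val) ⟨c, hc⟩
        = (⟨c, hc⟩ : E) := by
      rw [Units.mul_inv]; rfl
    rw [ContinuousLinearMap.mul_apply, IsUnit.unit_spec] at h2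
    have h3 := congrArg (Subtype.val) h2
    rw [hSEapp] at h3
    exact h3
  -- injectivity on E for |μ'| ≥ 1
  have hE_inj : ∀ (μ' : ℂ), 1 ≤ ‖μ'‖ → ∀ z : B, z ∈ E → μ' • z - T z = 0 → z = 0 := by
    intro μ' h z hz hz0
    have hu := hE_unit μ' h
    have hbij := ContinuousLinearMap.isUnit_iff_bijective.mp hu
    have heq : (algebraMap ℂ (E →L[ℂ] E) μ' - TE) ⟨z, hz⟩
        = (algebraMap ℂ (E →L[ℂ] E) μ' - TE) 0 := by
      rw [map_zero]
      apply Subtype.ext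
      rw [hSEapp]
      exact hz0
    have := hbij.1 heq
    simpa using congrArg Subtype.val this
  -- key: any μ' ≠ μ₀ with |μ'| ≥ 1 is not in the spectrum of T
  have hKey : ∀ μ' : ℂ, 1 ≤ ‖μ'‖ → μ' ≠ μ₀ → IsUnit (algebraMap ℂ (B →L[ℂ] B) μ' - T) := by
    intro μ' hnorm hne
    rw [ContinuousLinearMap.isUnit_iff_bijective]
    have hSapp : ∀ x : B, (algebraMap ℂ (B →L[ℂ] B) μ' - T) x = μ' • x - T x := by
      intro x
      rw [ContinuousLinearMap.sub_apply, Algebra.algebraMap_eq_smul_one,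
        ContinuousLinearMap.smul_apply, ContinuousLinearMap.one_apply]
    have hsub : μ' - μ₀ ≠ 0 := sub_ne_zero.mpr hne
    constructor
    · -- injective
      intro x₁ x₂ hx
      rw [hSapp, hSapp] at hx
      have hx0 : μ' • (x₁ - x₂) - T (x₁ - x₂) = 0 := by
        rw [map_sub, smul_sub, sub_sub_sub_comm, hx, sub_self]
      set x := x₁ - x₂ with hxdef
      obtain ⟨a, y, hy, hxy⟩ := hspan x
      have hcomp : μ' • x - T x = (a * (μ' - μ₀)) • v + (μ' • y - a • e - T y) := by
        rw [hxy, map_add, ContinuousLinearMap.map_smul, hTv]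
        module
      have hzE : μ' • y - a • e - T y ∈ E :=
        E.sub_mem (E.sub_mem (E.smul_mem _ hy) (E.smul_mem _ heE)) (hinv y hy)
      have ha0 : a * (μ' - μ₀) = 0 := by
        apply huniq _ _ hzE
        rw [← hcomp, hx0]; exact E.zero_mem
      have ha : a = 0 := by
        rcases mul_eq_zero.mp ha0 with h | h
        · exact h
        · exact absurd h hsub
      have hxE : x = y := by rw [hxy, ha, zero_smul, zero_add]
      have hx0' : x = 0 := hE_inj μ' hnorm x (hxE ▸ hy) hx0
      exact sub_eq_zero.mp hx0'
    · -- surjective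
      intro b
      obtain ⟨a, y, hy, hby⟩ := hspan b
      set c := a / (μ' - μ₀) with hcdef
      have hcE : y + c • e ∈ E := E.add_mem hy (E.smul_mem _ heE)
      obtain ⟨z, hz, hzeq⟩ := hsolve μ' hnorm (y + c • e) hcE
      refine ⟨c • v + z, ?_⟩
      rw [hSapp, map_add, ContinuousLinearMap.map_smul, hTv, hby]
      have hca : c * (μ' - μ₀) = a := div_mul_cancel₀ a hsub
      have hstep : μ' • (c • v + z) - (c • (μ₀ • v + e) + T z)
          = (c * (μ' - μ₀)) • v + ((μ' • z - T z) - c • e) := by module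
      rw [hstep, hca, hzeq]
      module
  -- extract the spectral value attaining the radius
  have hv0 : v ≠ 0 := fun h => hv (h ▸ E.zero_mem)
  haveI : Nontrivial B := nontrivial_of_ne v 0 hv0
  obtain ⟨k, hk, hknorm⟩ := spectrum.exists_nnnorm_eq_spectralRadius T
  have hk1 : 1 ≤ ‖k‖ := by
    have h1 : (1 : ENNReal) ≤ (‖k‖₊ : ENNReal) := hknorm ▸ hrad
    rw [← ENNReal.coe_one, ENNReal.coe_le_coe] at h1
    exact_mod_cast h1
  have hkμ₀ : k = μ₀ := by
    by_contra hne
    exact (spectrum.mem_iff.mp hk) (hKey k hk1 hne)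
  have hμ₀mem : μ₀ ∈ spectrum ℂ T := hkμ₀ ▸ hk
  have hμ₀norm : 1 ≤ ‖μ₀‖ := hkμ₀ ▸ hk1
  -- construct the eigenvector
  obtain ⟨z, hzE, hzeq⟩ := hsolve μ₀ hμ₀norm e heE
  refine ⟨μ₀, hμ₀mem, hμ₀norm, ?_, v + z, ?_, ?_⟩
  · intro μ' hμ' hμ'norm
    by_contra hne
    exact (spectrum.mem_iff.mp hμ') (hKey μ' hμ'norm hne)
  · intro h
    apply hv
    have hvz : v = -z := eq_neg_of_add_eq_zero_left h
    rw [hvz]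
    exact E.neg_mem hzE
  · rw [map_add, hTv]
    have hTz : T z = μ₀ • z - e := by rw [← hzeq]; abel
    rw [hTz, smul_add]
    abel
end
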